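/- Let Γ be a free ℤ-module of finite rank with a ℤ-valued symmetric bilinear form ⟨·,·⟩, and let Γ̂ = Γ ⊕ ℤ with the bilinear form ⟨(v,m),(v',m')⟩ = ⟨v,v'⟩ + mm'. Let f, g ∈ Γ_ℝ, regarded as (f,0), (g,0) ∈ Γ̂_ℝ, let C ∈ Γ, b ∈ {0,1}, τ in the complex upper half-plane ℍ, x ∈ Γ_ℂ and z ∈ ℂ. Assume the family γ ↦ (μ(⟨ξ,f⟩) − μ(⟨ξ,g⟩)) e^{πiτ⟨ξ,ξ⟩} e^{2πi⟨ξ,x⟩} (where ξ = γ + C/2, γ ∈ Γ) is summable. Then Θ^{(f,0),(g,0)}_{Γ̂,(C,b)}(τ, x + z·(0,1)) = θ_{b,0}(τ,z) · Θ^{f,g}_{Γ,C}(τ, x). -/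
import Mathlib


/-- The bilinear form on `ι → R` associated to an integer matrix `M`. -/
def bilin {ι : Type*} [Fintype ι] {R : Type*} [CommRing R] (M : Matrix ι ι ℤ)
    (v w : ι → R) : R :=
  ∑ i, ∑ j, (M i j : R) * v i * w j

/-- `μ(t) = 1` if `t ≥ 0` and `μ(t) = 0` otherwise (as a complex number). -/
noncomputable def charFun (t : ℝ) : ℂ := if 0 ≤ t then 1 else 0

/-- The theta function `Θ^{f,g}_{Γ,c}(τ,x)` of the lattice `Γ = ι → ℤ` with bilinear
form given by `M`. -/
noncomputable def latticeTheta {ι : Type*} [Fintype ι] (M : Matrix ι ι ℤ)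
    (f g : ι → ℝ) (c : ι → ℤ) (τ : ℂ) (x : ι → ℂ) : ℂ :=
  ∑' γ : ι → ℤ,
    (charFun (bilin M (fun i => (γ i : ℝ) + (c i : ℝ) / 2) f)
      - charFun (bilin M (fun i => (γ i : ℝ) + (c i : ℝ) / 2) g)) *
    Complex.exp (Real.pi * Complex.I * τ *
      bilin M (fun i => (γ i : ℂ) + (c i : ℂ) / 2) (fun i => (γ i : ℂ) + (c i : ℂ) / 2)) *
    Complex.exp (2 * Real.pi * Complex.I *
      bilin M (fun i => (γ i : ℂ) + (c i : ℂ) / 2) x)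

/-- The classical theta function
`θ_{μ,ν}(τ,z) = ∑_{n∈ℤ} e^{πinν} e^{πiτ(n+μ/2)²} e^{2πiz(n+μ/2)}`. -/
noncomputable def theta (μ ν : ℚ) (τ z : ℂ) : ℂ :=
  ∑' n : ℤ, Complex.exp (Real.pi * Complex.I * n * ν) *
    Complex.exp (Real.pi * Complex.I * τ * (n + μ / 2) ^ 2) *
    Complex.exp (2 * Real.pi * Complex.I * z * (n + μ / 2))

lemma bilin_fromBlocks {ι : Type*} [Fintype ι] {R : Type*} [CommRing R]
    (M : Matrix ι ι ℤ) (u v : ι → R) (s t : R) :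
    bilin (Matrix.fromBlocks M 0 0 (1 : Matrix Unit Unit ℤ)) (Sum.elim u fun _ => s)
      (Sum.elim v fun _ => t) = bilin M u v + s * t := by
  simp [bilin, Fintype.sum_sum_type, Matrix.one_apply]

/-- For `Γ̂ = Γ ⊕ ℤ` with form `⟨(v,m),(v',m')⟩ = ⟨v,v'⟩ + mm'`,
`Θ^{(f,0),(g,0)}_{Γ̂,(C,b)}(τ, x + z·(0,1)) = θ_{b,0}(τ,z) · Θ^{f,g}_{Γ,C}(τ,x)`. -/
theorem latticeTheta_rankOneExtension {ι : Type} [Fintype ι] [DecidableEq ι]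
    (M : Matrix ι ι ℤ) (hM : M.IsSymm) (f g : ι → ℝ) (C : ι → ℤ)
    (b : ℤ) (hb : b = 0 ∨ b = 1) (τ : ℂ) (hτ : 0 < τ.im) (x : ι → ℂ) (z : ℂ)
    (hsum : Summable (fun γ : ι → ℤ =>
      (charFun (bilin M (fun i => (γ i : ℝ) + (C i : ℝ) / 2) f)
        - charFun (bilin M (fun i => (γ i : ℝ) + (C i : ℝ) / 2) g)) *
      Complex.exp (Real.pi * Complex.I * τ *
        bilin M (fun i => (γ i : ℂ) + (C i : ℂ) / 2) (fun i => (γ i : ℂ) + (C i : ℂ) / 2)) *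
      Complex.exp (2 * Real.pi * Complex.I *
        bilin M (fun i => (γ i : ℂ) + (C i : ℂ) / 2) x))) :
    latticeTheta (Matrix.fromBlocks M 0 0 (1 : Matrix Unit Unit ℤ))
        (Sum.elim f 0) (Sum.elim g 0) (Sum.elim C fun _ => b) τ (Sum.elim x fun _ => z)
      = theta (b : ℚ) 0 τ z * latticeTheta M f g C τ x := by
  classical
  set A : (ι → ℤ) → ℂ := fun γ =>
      (charFun (bilin M (fun i => (γ i : ℝ) + (C i : ℝ) / 2) f)
        - charFun (bilin M (fun i => (γ i : ℝ) + (C i : ℝ) / 2) g)) *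
      Complex.exp (Real.pi * Complex.I * τ *
        bilin M (fun i => (γ i : ℂ) + (C i : ℂ) / 2) (fun i => (γ i : ℂ) + (C i : ℂ) / 2)) *
      Complex.exp (2 * Real.pi * Complex.I *
        bilin M (fun i => (γ i : ℂ) + (C i : ℂ) / 2) x) with hA
  set B : ℤ → ℂ := fun n =>
      Complex.exp (Real.pi * Complex.I * τ * ((n : ℂ) + (b : ℂ) / 2) ^ 2) *
      Complex.exp (2 * Real.pi * Complex.I * z * ((n : ℂ) + (b : ℂ) / 2)) with hB
  -- summability of B
  have hBsum : Summable B := by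
    have h1 : Summable (fun n : ℤ => jacobiTheta₂_term n (z + τ * (b : ℂ) / 2) τ) :=
      (summable_jacobiTheta₂_term_iff _ τ).mpr hτ
    have h2 := h1.mul_right
      (Complex.exp (Real.pi * Complex.I * τ * ((b : ℂ) / 2) ^ 2 +
        2 * Real.pi * Complex.I * z * ((b : ℂ) / 2)))
    refine h2.congr fun n => ?_
    simp only [hB, jacobiTheta₂_term, ← Complex.exp_add]
    congr 1
    ring
  -- theta equals tsum of B
  have hθ : theta (b : ℚ) 0 τ z = ∑' n : ℤ, B n := by
    unfold theta
    refine tsum_congr fun n => ?_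
    push_cast
    rw [mul_zero, Complex.exp_zero, one_mul]
  -- the reindexing equivalence
  let e : ℤ × (ι → ℤ) ≃ ((ι ⊕ Unit) → ℤ) :=
    (Equiv.prodComm ℤ (ι → ℤ)).trans
      (((Equiv.refl (ι → ℤ)).prodCongr (Equiv.funUnique Unit ℤ).symm).trans
        (Equiv.sumArrowEquivProdArrow ι Unit ℤ).symm)
  have hLHS : latticeTheta (Matrix.fromBlocks M 0 0 (1 : Matrix Unit Unit ℤ))
        (Sum.elim f 0) (Sum.elim g 0) (Sum.elim C fun _ => b) τ (Sum.elim x fun _ => z)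
      = ∑' p : ℤ × (ι → ℤ), B p.1 * A p.2 := by
    unfold latticeTheta
    rw [← e.tsum_eq]
    refine tsum_congr fun p => ?_
    obtain ⟨n, γ⟩ := p
    have he : e (n, γ) = Sum.elim γ (fun _ => n) := rfl
    rw [he]
    have hR : (fun i => ((Sum.elim γ (fun _ => n) : ι ⊕ Unit → ℤ) i : ℝ) +
        ((Sum.elim C (fun _ => b) : ι ⊕ Unit → ℤ) i : ℝ) / 2) =
        Sum.elim (fun i => (γ i : ℝ) + (C i : ℝ) / 2) (fun _ => (n : ℝ) + (b : ℝ) / 2) := by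
      funext i; cases i <;> simp
    have hC : (fun i => ((Sum.elim γ (fun _ => n) : ι ⊕ Unit → ℤ) i : ℂ) +
        ((Sum.elim C (fun _ => b) : ι ⊕ Unit → ℤ) i : ℂ) / 2) =
        Sum.elim (fun i => (γ i : ℂ) + (C i : ℂ) / 2) (fun _ => (n : ℂ) + (b : ℂ) / 2) := by
      funext i; cases i <;> simp
    rw [hR, hC]
    have hf0 : (Sum.elim f 0 : ι ⊕ Unit → ℝ) = Sum.elim f (fun _ => (0 : ℝ)) := rfl
    have hg0 : (Sum.elim g 0 : ι ⊕ Unit → ℝ) = Sum.elim g (fun _ => (0 : ℝ)) := rfl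
    rw [hf0, hg0, bilin_fromBlocks, bilin_fromBlocks, bilin_fromBlocks, bilin_fromBlocks]
    simp only [mul_zero, add_zero, hA, hB]
    set q : ℂ := (n : ℂ) + (b : ℂ) / 2 with hqdef
    set Q : ℂ := bilin M (fun i => ((γ i : ℂ) + (C i : ℂ) / 2))
        (fun i => ((γ i : ℂ) + (C i : ℂ) / 2)) with hQdef
    set L : ℂ := bilin M (fun i => ((γ i : ℂ) + (C i : ℂ) / 2)) x with hLdef
    rw [show (Real.pi : ℂ) * Complex.I * τ * (Q + q * q)
        = Real.pi * Complex.I * τ * Q + Real.pi * Complex.I * τ * q ^ 2 by ring,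
      show 2 * (Real.pi : ℂ) * Complex.I * (L + q * z)
        = 2 * Real.pi * Complex.I * L + 2 * Real.pi * Complex.I * z * q by ring,
      Complex.exp_add, Complex.exp_add]
    ring
  rw [hLHS, hθ]
  have hAn : Summable fun γ => ‖A γ‖ := summable_norm_iff.mpr hsum
  have hBn : Summable fun n => ‖B n‖ := summable_norm_iff.mpr hBsum
  exact (tsum_mul_tsum_of_summable_norm hBn hAn).symm
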